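/- arXiv:2312.10403 — 2 statements merged into one kernel-verified Lean document; each statement's English description precedes it below -/
import Mathlib

section
/- Let A ∈ ℝ^{m×n}, b ∈ ℝᵐ, and M ∈ ℝ^{n×n} symmetric positive definite, with weighted SVD Uᵀ A V = Σ and r = rank(A). A vector x ∈ ℝⁿ is the unique minimal-M-norm minimizer of ‖Ax − b‖₂ if and only if Aᵀ(Ax − b) = 0 and x is M-orthogonal to span{v_{r+1},…,v_n} (i.e. xᵀ M v_i = 0 for all r+1 ≤ i ≤ n), where v_i are the columns of V. -/
open Matrix

/-- Euclidean norm of a vector. -/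
noncomputable def enorm {m : ℕ} (x : Fin m → ℝ) : ℝ := Real.sqrt (x ⬝ᵥ x)

/-- M-weighted norm of a vector: ‖x‖_M = (xᵀ M x)^{1/2}. -/
noncomputable def mnorm {n : ℕ} (M : Matrix (Fin n) (Fin n) ℝ) (x : Fin n → ℝ) : ℝ :=
  Real.sqrt (x ⬝ᵥ M.mulVec x)

/-- Weighted matrix norm ‖A‖_{M,2} = sup_{x ≠ 0} ‖Ax‖₂ / ‖x‖_M. -/
noncomputable def wnorm {m n : ℕ} (A : Matrix (Fin m) (Fin n) ℝ)
    (M : Matrix (Fin n) (Fin n) ℝ) : ℝ :=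
  sSup {t : ℝ | ∃ x : Fin n → ℝ, x ≠ 0 ∧ t = _root_.enorm (A.mulVec x) / mnorm M x}

/-- The m×n "diagonal" matrix with entries σ₁,…,σ_r on the leading diagonal and zeros elsewhere. -/
noncomputable def wsvdSigma (m n r : ℕ) (σ : Fin r → ℝ) : Matrix (Fin m) (Fin n) ℝ :=
  Matrix.of fun i j => if h : (i : ℕ) = (j : ℕ) ∧ (i : ℕ) < r then σ ⟨i, h.2⟩ else 0

lemma dotSelf_nonneg {m : ℕ} (a : Fin m → ℝ) : 0 ≤ a ⬝ᵥ a :=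
  Finset.sum_nonneg fun i _ => mul_self_nonneg _

lemma sigma_mulVec {m n r : ℕ} (hrn : r ≤ n) (σ : Fin r → ℝ) (d : Fin n → ℝ) (i : Fin m) :
    (wsvdSigma m n r σ).mulVec d i =
      if h : (i : ℕ) < r then σ ⟨i, h⟩ * d ⟨i, h.trans_le hrn⟩ else 0 := by
  simp only [Matrix.mulVec, dotProduct, wsvdSigma, Matrix.of_apply]
  by_cases h : (i : ℕ) < r
  · rw [dif_pos h, Finset.sum_eq_single (⟨(i:ℕ), h.trans_le hrn⟩ : Fin n)]
    · rw [dif_pos ⟨rfl, h⟩]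
    · intro j _ hj
      rw [dif_neg, zero_mul]
      rintro ⟨h1, -⟩
      exact hj (Fin.ext h1.symm)
    · simp
  · rw [dif_neg h]
    refine Finset.sum_eq_zero fun j _ => ?_
    rw [dif_neg, zero_mul]
    rintro ⟨-, h2⟩
    exact h h2

lemma sigmaT_mulVec {m n r : ℕ} (hrm : r ≤ m) (σ : Fin r → ℝ) (w : Fin m → ℝ) (j : Fin n) :
    (wsvdSigma m n r σ)ᵀ.mulVec w j =
      if h : (j : ℕ) < r then σ ⟨j, h⟩ * w ⟨j, h.trans_le hrm⟩ else 0 := by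
  simp only [Matrix.mulVec, dotProduct, wsvdSigma, Matrix.transpose_apply, Matrix.of_apply]
  by_cases h : (j : ℕ) < r
  · rw [dif_pos h, Finset.sum_eq_single (⟨(j:ℕ), h.trans_le hrm⟩ : Fin m)]
    · rw [dif_pos ⟨rfl, h⟩]
    · intro i _ hi
      rw [dif_neg, zero_mul]
      rintro ⟨h1, -⟩
      exact hi (Fin.ext h1)
    · simp
  · rw [dif_neg h]
    refine Finset.sum_eq_zero fun i _ => ?_
    rw [dif_neg, zero_mul]
    rintro ⟨h1, h2⟩
    exact h (h1 ▸ h2)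

/-- characterization of minimizers of the diagonal least-squares problem -/
lemma min_iff {m n r : ℕ} (hrm : r ≤ m) (hrn : r ≤ n) (σ : Fin r → ℝ) (hσpos : ∀ i, 0 < σ i)
    (β : Fin m → ℝ) (d : Fin n → ℝ) :
    (∀ e : Fin n → ℝ,
      ((wsvdSigma m n r σ).mulVec d - β) ⬝ᵥ ((wsvdSigma m n r σ).mulVec d - β) ≤
      ((wsvdSigma m n r σ).mulVec e - β) ⬝ᵥ ((wsvdSigma m n r σ).mulVec e - β)) ↔
    ∀ (i : Fin m) (h : (i:ℕ) < r), σ ⟨i, h⟩ * d ⟨i, h.trans_le hrn⟩ = β i := by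
  set S := wsvdSigma m n r σ with hS
  set g : Fin m → ℝ := fun i => if (i:ℕ) < r then 0 else β i * β i with hg
  have hgle : ∀ (e : Fin n → ℝ) (i : Fin m),
      g i ≤ (S.mulVec e - β) i * (S.mulVec e - β) i := by
    intro e i
    simp only [Pi.sub_apply, hS, sigma_mulVec hrn, hg]
    by_cases h : (i:ℕ) < r
    · rw [if_pos h]; exact mul_self_nonneg _
    · rw [if_neg h, dif_neg h, zero_sub, neg_mul_neg]
  have key : ∀ e : Fin n → ℝ,
      (∀ (i : Fin m) (h : (i:ℕ) < r), σ ⟨i, h⟩ * e ⟨i, h.trans_le hrn⟩ = β i) →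
      ∀ i : Fin m, (S.mulVec e - β) i * (S.mulVec e - β) i = g i := by
    intro e he i
    simp only [Pi.sub_apply, hS, sigma_mulVec hrn, hg]
    by_cases h : (i:ℕ) < r
    · rw [if_pos h, dif_pos h, he i h, sub_self, mul_zero]
    · rw [if_neg h, dif_neg h, zero_sub, neg_mul_neg]
  have hstar : ∃ e : Fin n → ℝ,
      ∀ (i : Fin m) (h : (i:ℕ) < r), σ ⟨i, h⟩ * e ⟨i, h.trans_le hrn⟩ = β i := by
    refine ⟨fun j => if h : (j:ℕ) < r then β ⟨j, h.trans_le hrm⟩ / σ ⟨j, h⟩ else 0, ?_⟩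
    intro i h
    simp only [dif_pos h]
    rw [mul_comm, div_mul_cancel₀ _ (ne_of_gt (hσpos _))]
  constructor
  · intro hd i h
    obtain ⟨e0, he0⟩ := hstar
    have h1 : ∑ i : Fin m, (S.mulVec d - β) i * (S.mulVec d - β) i ≤ ∑ i : Fin m, g i := by
      calc ∑ i : Fin m, (S.mulVec d - β) i * (S.mulVec d - β) i
          = (S.mulVec d - β) ⬝ᵥ (S.mulVec d - β) := rfl
        _ ≤ (S.mulVec e0 - β) ⬝ᵥ (S.mulVec e0 - β) := hd e0
        _ = ∑ i : Fin m, g i := Finset.sum_congr rfl fun i _ => key e0 he0 i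
    have h3 : ∀ i ∈ Finset.univ, g i ≤ (S.mulVec d - β) i * (S.mulVec d - β) i :=
      fun i _ => hgle d i
    have h4 : ∑ i : Fin m, g i = ∑ i : Fin m, (S.mulVec d - β) i * (S.mulVec d - β) i :=
      le_antisymm (Finset.sum_le_sum h3) h1
    have h5 := (Finset.sum_eq_sum_iff_of_le h3).mp h4 i (Finset.mem_univ i)
    rw [hg] at h5
    simp only [if_pos h] at h5
    have h6 : (S.mulVec d - β) i = 0 := mul_self_eq_zero.mp h5.symm
    have h7 : S.mulVec d i - β i = 0 := h6
    rw [hS, sigma_mulVec hrn, dif_pos h] at h7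
    exact sub_eq_zero.mp h7
  · intro hQ e
    have h1 : (S.mulVec d - β) ⬝ᵥ (S.mulVec d - β) = ∑ i : Fin m, g i :=
      Finset.sum_congr rfl fun i _ => key d hQ i
    have h2 : ∑ i : Fin m, g i ≤ (S.mulVec e - β) ⬝ᵥ (S.mulVec e - β) :=
      Finset.sum_le_sum fun i _ => hgle e i
    exact h1 ▸ (h1.symm ▸ h2)

theorem stmt_12 {m n r : ℕ} (A : Matrix (Fin m) (Fin n) ℝ) (b : Fin m → ℝ)
    (M : Matrix (Fin n) (Fin n) ℝ)
    (hM : M.PosDef) (U : Matrix (Fin m) (Fin m) ℝ) (V : Matrix (Fin n) (Fin n) ℝ)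
    (σ : Fin r → ℝ) (hr : r = A.rank) (hrm : r ≤ m) (hrn : r ≤ n)
    (hU : Uᵀ * U = 1) (hV : Vᵀ * M * V = 1)
    (hσpos : ∀ i, 0 < σ i) (hσmono : ∀ i j : Fin r, i ≤ j → σ j ≤ σ i)
    (hSVD : Uᵀ * A * V = wsvdSigma m n r σ)
    (x : Fin n → ℝ) :
    ((∀ y : Fin n → ℝ, _root_.enorm (A.mulVec x - b) ≤ _root_.enorm (A.mulVec y - b)) ∧
      ∀ y : Fin n → ℝ, (∀ z : Fin n → ℝ, _root_.enorm (A.mulVec y - b) ≤ _root_.enorm (A.mulVec z - b)) →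
        y ≠ x → mnorm M x < mnorm M y) ↔
    (Aᵀ.mulVec (A.mulVec x - b) = 0 ∧
      ∀ j : Fin n, r ≤ (j : ℕ) → x ⬝ᵥ M.mulVec (fun l => V l j) = 0) := by
  have hMsymm : Mᵀ = M := hM.1.eq
  set S := wsvdSigma m n r σ with hS
  have hV2 : V * (Vᵀ * M) = 1 := mul_eq_one_comm.mp hV
  have hU2 : U * Uᵀ = 1 := mul_eq_one_comm.mp hU
  have hA : A = U * S * (Vᵀ * M) := by
    have h1 : U * (Uᵀ * A * V) * (Vᵀ * M) = (U * Uᵀ) * A * (V * (Vᵀ * M)) := by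
      simp only [Matrix.mul_assoc]
    rw [hSVD] at h1
    rw [hU2, hV2, Matrix.one_mul, Matrix.mul_one] at h1
    exact h1.symm
  set c : Fin n → ℝ := (Vᵀ * M).mulVec x with hc
  set β : Fin m → ℝ := Uᵀ.mulVec b with hβ
  have hVc : V.mulVec c = x := by
    rw [hc, Matrix.mulVec_mulVec, hV2, Matrix.one_mulVec]
  have hUβ : U.mulVec β = b := by
    rw [hβ, Matrix.mulVec_mulVec, hU2, Matrix.one_mulVec]
  have hcVM : ∀ d : Fin n → ℝ, (Vᵀ * M).mulVec (V.mulVec d) = d := by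
    intro d; rw [Matrix.mulVec_mulVec, hV, Matrix.one_mulVec]
  have hUdot : ∀ w : Fin m → ℝ, (U.mulVec w) ⬝ᵥ (U.mulVec w) = w ⬝ᵥ w := by
    intro w
    rw [Matrix.dotProduct_mulVec, ← Matrix.mulVec_transpose, Matrix.mulVec_mulVec, hU,
      Matrix.one_mulVec]
  have hUU : ∀ w : Fin m → ℝ, Uᵀ.mulVec (U.mulVec w) = w := by
    intro w; rw [Matrix.mulVec_mulVec, hU, Matrix.one_mulVec]
  have hres : ∀ y : Fin n → ℝ,
      A.mulVec y - b = U.mulVec (S.mulVec ((Vᵀ * M).mulVec y) - β) := by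
    intro y
    rw [Matrix.mulVec_sub, hUβ, hA, ← Matrix.mulVec_mulVec, ← Matrix.mulVec_mulVec]
  have henorm : ∀ y : Fin n → ℝ, _root_.enorm (A.mulVec y - b) =
      Real.sqrt ((S.mulVec ((Vᵀ * M).mulVec y) - β) ⬝ᵥ (S.mulVec ((Vᵀ * M).mulVec y) - β)) := by
    intro y
    rw [_root_.enorm, hres y, hUdot]
  have hmnorm : ∀ d : Fin n → ℝ, mnorm M (V.mulVec d) = Real.sqrt (d ⬝ᵥ d) := by
    intro d
    rw [mnorm]
    congr 1
    rw [Matrix.mulVec_mulVec, Matrix.dotProduct_mulVec, ← Matrix.mulVec_transpose,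
      Matrix.mulVec_mulVec, Matrix.transpose_mul, hMsymm, hV, Matrix.one_mulVec]
  -- normal equations in c-coordinates
  have hATres : Aᵀ.mulVec (A.mulVec x - b) = (M * V).mulVec (Sᵀ.mulVec (S.mulVec c - β)) := by
    rw [hres x, ← hc, hA]
    simp only [Matrix.transpose_mul, Matrix.transpose_transpose, hMsymm]
    simp only [← Matrix.mulVec_mulVec]
    rw [hUU]
  have hMVinj : ∀ z : Fin n → ℝ, (M * V).mulVec z = 0 → z = 0 := by
    intro z hz
    have h2 : Vᵀ.mulVec ((M * V).mulVec z) = Vᵀ.mulVec 0 := by rw [hz]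
    rwa [Matrix.mulVec_mulVec, ← Matrix.mul_assoc, hV, Matrix.one_mulVec,
      Matrix.mulVec_zero] at h2
  have hziff : Sᵀ.mulVec (S.mulVec c - β) = 0 ↔
      ∀ (i : Fin m), (i:ℕ) < r → (S.mulVec c - β) i = 0 := by
    rw [funext_iff]
    constructor
    · intro hz i hir
      have hj := hz ⟨(i:ℕ), hir.trans_le hrn⟩
      rw [hS, sigmaT_mulVec hrm] at hj
      rw [dif_pos (show ((⟨(i:ℕ), hir.trans_le hrn⟩ : Fin n) : ℕ) < r from hir)] at hj
      simp only [Pi.zero_apply] at hj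
      have h6 := (mul_eq_zero.mp hj).resolve_left (ne_of_gt (hσpos _))
      exact h6
    · intro hw j
      rw [hS, sigmaT_mulVec hrm]
      simp only [Pi.zero_apply]
      by_cases h : (j:ℕ) < r
      · rw [dif_pos h]
        have h6 : (S.mulVec c - β) ⟨(j:ℕ), h.trans_le hrm⟩ = 0 := hw _ h
        rw [hS] at h6
        rw [h6, mul_zero]
      · rw [dif_neg h]
  have hW : ∀ (i : Fin m) (h : (i:ℕ) < r),
      ((S.mulVec c - β) i = 0 ↔ σ ⟨i, h⟩ * c ⟨i, h.trans_le hrn⟩ = β i) := by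
    intro i h
    rw [Pi.sub_apply, hS, sigma_mulVec hrn, dif_pos h, sub_eq_zero]
  have hRHS1 : Aᵀ.mulVec (A.mulVec x - b) = 0 ↔
      ∀ (i : Fin m) (h : (i:ℕ) < r), σ ⟨i, h⟩ * c ⟨i, h.trans_le hrn⟩ = β i := by
    rw [hATres]
    constructor
    · intro h0 i hir
      have hz := hMVinj _ h0
      exact (hW i hir).mp (hziff.mp hz i hir)
    · intro hQ
      have hz : Sᵀ.mulVec (S.mulVec c - β) = 0 :=
        hziff.mpr fun i hir => (hW i hir).mpr (hQ i hir)
      rw [hz, Matrix.mulVec_zero]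
  have hMe : ∀ a b : Fin n, M a b = M b a := by
    intro a b
    conv_lhs => rw [← hMsymm]
    exact Matrix.transpose_apply M a b
  have hcol : ∀ j : Fin n, x ⬝ᵥ M.mulVec (fun l => V l j) = c j := by
    intro j
    rw [hc]
    simp only [Matrix.mulVec, dotProduct, Matrix.mul_apply, Matrix.transpose_apply]
    refine Finset.sum_congr rfl fun i _ => ?_
    rw [Finset.mul_sum, Finset.sum_mul]
    refine Finset.sum_congr rfl fun l _ => ?_
    rw [hMe l i]
    ring
  have hRHS2 : (∀ j : Fin n, r ≤ (j:ℕ) → x ⬝ᵥ M.mulVec (fun l => V l j) = 0) ↔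
      (∀ j : Fin n, r ≤ (j:ℕ) → c j = 0) := by
    refine forall_congr' fun j => imp_congr_right fun _ => ?_
    rw [hcol j]
  -- the two optimization conditions in c-coordinates
  have hL1 : (∀ y : Fin n → ℝ, _root_.enorm (A.mulVec x - b) ≤ _root_.enorm (A.mulVec y - b)) ↔
      (∀ d : Fin n → ℝ, (S.mulVec c - β) ⬝ᵥ (S.mulVec c - β) ≤
        (S.mulVec d - β) ⬝ᵥ (S.mulVec d - β)) := by
    constructor
    · intro h d
      have h1 := h (V.mulVec d)
      rw [henorm, henorm, ← hc, hcVM] at h1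
      exact (Real.sqrt_le_sqrt_iff (dotSelf_nonneg _)).mp h1
    · intro h y
      rw [henorm, henorm, ← hc]
      exact Real.sqrt_le_sqrt (h _)
  have hL2 : (∀ y : Fin n → ℝ,
        (∀ z : Fin n → ℝ, _root_.enorm (A.mulVec y - b) ≤ _root_.enorm (A.mulVec z - b)) →
        y ≠ x → mnorm M x < mnorm M y) ↔
      (∀ d : Fin n → ℝ,
        (∀ e : Fin n → ℝ, (S.mulVec d - β) ⬝ᵥ (S.mulVec d - β) ≤
          (S.mulVec e - β) ⬝ᵥ (S.mulVec e - β)) →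
        d ≠ c → c ⬝ᵥ c < d ⬝ᵥ d) := by
    constructor
    · intro h d hdmin hdc
      have h1 : ∀ z : Fin n → ℝ, _root_.enorm (A.mulVec (V.mulVec d) - b) ≤ _root_.enorm (A.mulVec z - b) := by
        intro z
        rw [henorm, henorm, hcVM]
        exact Real.sqrt_le_sqrt (hdmin _)
      have h2 : V.mulVec d ≠ x := by
        intro hEq
        apply hdc
        rw [← hcVM d, hEq, ← hc]
      have h3 := h (V.mulVec d) h1 h2
      rw [← hVc, hmnorm, hmnorm] at h3
      exact (Real.sqrt_lt_sqrt_iff (dotSelf_nonneg _)).mp h3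
    · intro h y hymin hyx
      have hyd : V.mulVec ((Vᵀ * M).mulVec y) = y := by
        rw [Matrix.mulVec_mulVec, hV2, Matrix.one_mulVec]
      have h1 : ∀ e : Fin n → ℝ,
          (S.mulVec ((Vᵀ * M).mulVec y) - β) ⬝ᵥ (S.mulVec ((Vᵀ * M).mulVec y) - β) ≤
          (S.mulVec e - β) ⬝ᵥ (S.mulVec e - β) := by
        intro e
        have h0 := hymin (V.mulVec e)
        rw [henorm, henorm, hcVM] at h0
        exact (Real.sqrt_le_sqrt_iff (dotSelf_nonneg _)).mp h0
      have h2 : (Vᵀ * M).mulVec y ≠ c := by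
        intro hEq
        apply hyx
        rw [← hyd, hEq, hVc]
      have h3 := h _ h1 h2
      rw [← hVc, hmnorm, ← hyd, hmnorm]
      exact Real.sqrt_lt_sqrt (dotSelf_nonneg _) h3
  have hmin : ∀ d : Fin n → ℝ,
      (∀ e : Fin n → ℝ, (S.mulVec d - β) ⬝ᵥ (S.mulVec d - β) ≤
        (S.mulVec e - β) ⬝ᵥ (S.mulVec e - β)) ↔
      ∀ (i : Fin m) (h : (i:ℕ) < r), σ ⟨i, h⟩ * d ⟨i, h.trans_le hrn⟩ = β i := by
    simp only [hS]
    exact min_iff hrm hrn σ hσpos β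
  rw [hL1, hL2, hRHS1, hRHS2]
  constructor
  · rintro ⟨h1, h2⟩
    refine ⟨(hmin c).mp h1, ?_⟩
    set d : Fin n → ℝ := fun j => if (j:ℕ) < r then c j else 0 with hd
    have hdlt : ∀ j : Fin n, (j:ℕ) < r → d j = c j := by
      intro j h
      show (if (j:ℕ) < r then c j else 0) = c j
      exact if_pos h
    have hdge : ∀ j : Fin n, ¬(j:ℕ) < r → d j = 0 := by
      intro j h
      show (if (j:ℕ) < r then c j else 0) = 0
      exact if_neg h
    have hSd : S.mulVec d = S.mulVec c := by
      funext i
      rw [hS, sigma_mulVec hrn, sigma_mulVec hrn]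
      by_cases h : (i:ℕ) < r
      · rw [dif_pos h, dif_pos h, hdlt _ h]
      · rw [dif_neg h, dif_neg h]
    intro j hj
    by_cases hdc : d = c
    · rw [← congrFun hdc j]
      exact hdge j (not_lt.mpr hj)
    · exfalso
      have h3 : ∀ e : Fin n → ℝ, (S.mulVec d - β) ⬝ᵥ (S.mulVec d - β) ≤
          (S.mulVec e - β) ⬝ᵥ (S.mulVec e - β) := by
        intro e; rw [hSd]; exact h1 e
      have h4 := h2 d h3 hdc
      have h5 : d ⬝ᵥ d ≤ c ⬝ᵥ c := by
        refine Finset.sum_le_sum fun j _ => ?_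
        by_cases h : (j:ℕ) < r
        · rw [hdlt j h]
        · rw [hdge j h, zero_mul]
          exact mul_self_nonneg _
      exact absurd h4 (not_lt.mpr h5)
  · rintro ⟨hQ1, hQ2⟩
    refine ⟨(hmin c).mpr hQ1, ?_⟩
    intro d hdmin hdc
    have hQ1d := (hmin d).mp hdmin
    have hlt : ∀ j : Fin n, (j:ℕ) < r → d j = c j := by
      intro j hj
      have h1' : σ ⟨(j:ℕ), hj⟩ * d j = β ⟨(j:ℕ), hj.trans_le hrm⟩ :=
        hQ1d ⟨(j:ℕ), hj.trans_le hrm⟩ hj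
      have h2' : σ ⟨(j:ℕ), hj⟩ * c j = β ⟨(j:ℕ), hj.trans_le hrm⟩ :=
        hQ1 ⟨(j:ℕ), hj.trans_le hrm⟩ hj
      exact mul_left_cancel₀ (ne_of_gt (hσpos _)) (h1'.trans h2'.symm)
    obtain ⟨j0, hj0⟩ := Function.ne_iff.mp hdc
    have hj0r : ¬(j0:ℕ) < r := fun h => hj0 (hlt j0 h)
    have hcj0 : c j0 = 0 := hQ2 j0 (not_lt.mp hj0r)
    have hdj0 : d j0 ≠ 0 := fun h => hj0 (by rw [h, hcj0])
    refine Finset.sum_lt_sum (fun j _ => ?_) ⟨j0, Finset.mem_univ j0, ?_⟩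
    · by_cases h : (j:ℕ) < r
      · rw [hlt j h]
      · rw [hQ2 j (not_lt.mp h), zero_mul]
        exact mul_self_nonneg _
    · rw [hcj0, zero_mul]
      exact mul_self_pos.mpr hdj0
end

section
/- Let A ∈ ℝ^{m×n}, b ∈ ℝᵐ, M ∈ ℝ^{n×n} symmetric positive definite, and λ > 0. Suppose Uᵀ A V = Σ is a weighted SVD of A with weight M with weighted singular values σ₁ ≥ … ≥ σ_r > 0, r = rank(A). Then the function x ↦ ‖Ax − b‖₂² + λ xᵀ M x has a unique minimizer over ℝⁿ, given by x_λ = Σ_{i=1}^{r} (σ_i² / (σ_i² + λ)) · (u_iᵀ b / σ_i) · v_i, where u_i, v_i are the i-th columns of U and V. -/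
open Matrix

lemma sum_castLE {n r : ℕ} (h : r ≤ n) (g : Fin n → ℝ)
    (hg : ∀ j : Fin n, r ≤ (j:ℕ) → g j = 0) :
    ∑ j, g j = ∑ i : Fin r, g (Fin.castLE h i) := by
  classical
  rw [show (∑ i : Fin r, g (Fin.castLE h i)) = ∑ j ∈ Finset.univ.map (Fin.castLEEmb h), g j from
    (Finset.sum_map Finset.univ (Fin.castLEEmb h) g).symm]
  symm
  apply Finset.sum_subset (Finset.subset_univ _)
  intro j _ hj
  apply hg
  by_contra hc
  push_neg at hc
  exact hj (Finset.mem_map.mpr ⟨⟨j, hc⟩, Finset.mem_univ _, rfl⟩)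

lemma wsvd_mulVec {m n r : ℕ} (hrn : r ≤ n) (σ : Fin r → ℝ) (y : Fin n → ℝ) (i : Fin m) :
    ((wsvdSigma m n r σ).mulVec y) i
      = if h : (i:ℕ) < r then σ ⟨i, h⟩ * y ⟨i, h.trans_le hrn⟩ else 0 := by
  unfold wsvdSigma
  simp only [mulVec, dotProduct, of_apply]
  by_cases h : (i:ℕ) < r
  · rw [dif_pos h, Finset.sum_eq_single (⟨(i:ℕ), h.trans_le hrn⟩ : Fin n)]
    · rw [dif_pos ⟨rfl, h⟩]
    · intro j _ hj
      rw [dif_neg, zero_mul]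
      rintro ⟨h1, -⟩
      exact hj (Fin.ext h1.symm)
    · intro hmem; exact absurd (Finset.mem_univ _) hmem
  · rw [dif_neg h]
    apply Finset.sum_eq_zero
    intro j _
    rw [dif_neg, zero_mul]
    rintro ⟨-, h2⟩; exact h h2

lemma wsvd_tmulVec {m n r : ℕ} (hrm : r ≤ m) (σ : Fin r → ℝ) (w : Fin m → ℝ) (j : Fin n) :
    ((wsvdSigma m n r σ)ᵀ.mulVec w) j
      = if h : (j:ℕ) < r then σ ⟨j, h⟩ * w ⟨j, h.trans_le hrm⟩ else 0 := by
  unfold wsvdSigma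
  simp only [mulVec, dotProduct, transpose_apply, of_apply]
  by_cases h : (j:ℕ) < r
  · rw [dif_pos h, Finset.sum_eq_single (⟨(j:ℕ), h.trans_le hrm⟩ : Fin m)]
    · rw [dif_pos ⟨rfl, h⟩]
    · intro i _ hi
      rw [dif_neg, zero_mul]
      rintro ⟨h1, -⟩
      exact hi (Fin.ext h1)
    · intro hmem; exact absurd (Finset.mem_univ _) hmem
  · rw [dif_neg h]
    apply Finset.sum_eq_zero
    intro i _
    rw [dif_neg, zero_mul]
    rintro ⟨h1, h2⟩; exact h (h1 ▸ h2)

lemma dot_trans {k l : ℕ} (A : Matrix (Fin k) (Fin l) ℝ) (v : Fin k → ℝ) (w : Fin l → ℝ) :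
    v ⬝ᵥ A.mulVec w = (Aᵀ.mulVec v) ⬝ᵥ w := by
  rw [dotProduct_mulVec, mulVec_transpose]

lemma dot_self_nonneg {k : ℕ} (v : Fin k → ℝ) : 0 ≤ v ⬝ᵥ v :=
  Finset.sum_nonneg fun i _ => mul_self_nonneg (v i)

lemma enorm_sq {k : ℕ} (z : Fin k → ℝ) : _root_.enorm z ^ 2 = z ⬝ᵥ z :=
  Real.sq_sqrt (dot_self_nonneg z)

theorem stmt_15 {m n r : ℕ} (A : Matrix (Fin m) (Fin n) ℝ) (b : Fin m → ℝ)
    (M : Matrix (Fin n) (Fin n) ℝ) (lam : ℝ) (hlam : 0 < lam)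
    (hM : M.PosDef) (U : Matrix (Fin m) (Fin m) ℝ) (V : Matrix (Fin n) (Fin n) ℝ)
    (σ : Fin r → ℝ) (hr : r = A.rank) (hrm : r ≤ m) (hrn : r ≤ n)
    (hU : Uᵀ * U = 1) (hV : Vᵀ * M * V = 1)
    (hσpos : ∀ i, 0 < σ i) (hσmono : ∀ i j : Fin r, i ≤ j → σ j ≤ σ i)
    (hSVD : Uᵀ * A * V = wsvdSigma m n r σ)
    (xlam : Fin n → ℝ)
    (hxlam : xlam = ∑ i : Fin r,
      ((σ i ^ 2 / (σ i ^ 2 + lam)) * (((fun l => U l (Fin.castLE hrm i)) ⬝ᵥ b) / σ i)) •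
        (fun l => V l (Fin.castLE hrn i))) :
    (∀ x : Fin n → ℝ,
      _root_.enorm (A.mulVec xlam - b) ^ 2 + lam * (xlam ⬝ᵥ M.mulVec xlam) ≤
        _root_.enorm (A.mulVec x - b) ^ 2 + lam * (x ⬝ᵥ M.mulVec x)) ∧
    ∀ x : Fin n → ℝ,
      _root_.enorm (A.mulVec x - b) ^ 2 + lam * (x ⬝ᵥ M.mulVec x) =
        _root_.enorm (A.mulVec xlam - b) ^ 2 + lam * (xlam ⬝ᵥ M.mulVec xlam) → x = xlam := by
  classical
  set S : Matrix (Fin m) (Fin n) ℝ := wsvdSigma m n r σ with hSdef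
  set c : Fin m → ℝ := Uᵀ.mulVec b with hcdef
  have hUUt : U * Uᵀ = 1 := mul_eq_one_comm.mp hU
  have hVW : V * (Vᵀ * M) = 1 := by
    exact mul_eq_one_comm.mp hV
  have hMt : Mᵀ = M := by
    have := hM.isHermitian
    simpa [Matrix.IsHermitian, conjTranspose_eq_transpose_of_trivial] using this
  have hAV : A * V = U * S := by
    rw [← hSVD, ← Matrix.mul_assoc, ← Matrix.mul_assoc, hUUt, Matrix.one_mul]
  -- the change of variables formula
  have hF : ∀ y : Fin n → ℝ,
      _root_.enorm (A.mulVec (V.mulVec y) - b) ^ 2 + lam * ((V.mulVec y) ⬝ᵥ M.mulVec (V.mulVec y))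
        = (S.mulVec y - c) ⬝ᵥ (S.mulVec y - c) + lam * (y ⬝ᵥ y) := by
    intro y
    rw [enorm_sq]
    have h1 : A.mulVec (V.mulVec y) = U.mulVec (S.mulVec y) := by
      rw [mulVec_mulVec, hAV, ← mulVec_mulVec]
    have h2 : (V.mulVec y) ⬝ᵥ M.mulVec (V.mulVec y) = y ⬝ᵥ y := by
      rw [dot_trans, mulVec_mulVec, dot_trans, mulVec_mulVec]
      rw [show Vᵀ * (Mᵀ * V) = Vᵀ * M * V by rw [hMt, ← Matrix.mul_assoc], hV, one_mulVec]
    rw [h1, h2]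
    congr 1
    -- (U z - b)⬝(U z - b) = (z - c)⬝(z - c)
    set z := S.mulVec y
    have hzz : (U.mulVec z) ⬝ᵥ (U.mulVec z) = z ⬝ᵥ z := by
      rw [dot_trans, mulVec_mulVec, hU, one_mulVec]
    have hzb : (U.mulVec z) ⬝ᵥ b = z ⬝ᵥ c := by
      rw [dotProduct_comm, hcdef, dot_trans, dotProduct_comm]
    have hbz : b ⬝ᵥ (U.mulVec z) = c ⬝ᵥ z := by
      rw [hcdef, dot_trans]
    have hbb : c ⬝ᵥ c = b ⬝ᵥ b := by
      rw [hcdef, dot_trans, mulVec_mulVec, transpose_transpose, hUUt, one_mulVec]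
    simp only [dotProduct_sub, sub_dotProduct]
    rw [hzz, hzb, hbz, hbb]
  -- the candidate in y-coordinates
  set yl : Fin n → ℝ := fun j =>
    if h : (j:ℕ) < r then σ ⟨j, h⟩ * c ⟨j, h.trans_le hrm⟩ / (σ ⟨j, h⟩ ^ 2 + lam) else 0
    with hyldef
  have hσlam : ∀ i : Fin r, σ i ^ 2 + lam ≠ 0 := fun i => by positivity
  have hxleq : xlam = V.mulVec yl := by
    funext l
    rw [hxlam]
    simp only [Finset.sum_apply, Pi.smul_apply, smul_eq_mul]
    show _ = (V.mulVec yl) l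
    rw [show (V.mulVec yl) l = ∑ j, V l j * yl j from rfl]
    rw [sum_castLE hrn (fun j => V l j * yl j)
      (by intro j hj; simp [hyldef, dif_neg (not_lt.mpr hj)])]
    apply Finset.sum_congr rfl
    intro i _
    have hi : ((Fin.castLE hrn i : Fin n) : ℕ) < r := i.isLt
    rw [hyldef]
    simp only [hi, dif_pos]
    have h1 : (⟨((Fin.castLE hrn i : Fin n) : ℕ), hi⟩ : Fin r) = i := by
      apply Fin.ext; rfl
    have h2 : (⟨((Fin.castLE hrn i : Fin n) : ℕ), hi.trans_le hrm⟩ : Fin m) = Fin.castLE hrm i := by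
      apply Fin.ext; rfl
    rw [h1, h2]
    have hc2 : c (Fin.castLE hrm i) = (fun l => U l (Fin.castLE hrm i)) ⬝ᵥ b := by
      simp [hcdef, mulVec, dotProduct, transpose_apply]
    rw [hc2]
    have hσ := (hσpos i).ne'
    field_simp
  -- normal equation
  have hNE : Sᵀ.mulVec (S.mulVec yl - c) + lam • yl = 0 := by
    funext j
    simp only [Pi.add_apply, Pi.smul_apply, Pi.zero_apply, smul_eq_mul]
    rw [wsvd_tmulVec hrm σ _ j]
    by_cases h : (j:ℕ) < r
    · rw [dif_pos h]
      set i : Fin m := ⟨(j:ℕ), h.trans_le hrm⟩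
      have hSi : (S.mulVec yl) i = σ ⟨j, h⟩ * yl ⟨j, h.trans_le hrn⟩ := by
        rw [hSdef, wsvd_mulVec hrn σ yl i]
        rw [dif_pos (show ((i:ℕ) < r) from h)]
      have hyli : yl ⟨(j:ℕ), h.trans_le hrn⟩ = σ ⟨j, h⟩ * c i / (σ ⟨j, h⟩ ^ 2 + lam) := by
        rw [hyldef]; simp only [dif_pos h]; rfl
      have hylj : yl j = σ ⟨j, h⟩ * c i / (σ ⟨j, h⟩ ^ 2 + lam) := by
        rw [hyldef]; simp only [dif_pos h]; rfl
      simp only [Pi.sub_apply, hSi, hyli, hylj]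
      have := hσlam ⟨j, h⟩
      field_simp
      ring
    · rw [dif_neg h]
      have : yl j = 0 := by rw [hyldef]; simp [dif_neg h]
      rw [this, mul_zero, add_zero]
  -- quadratic expansion
  have hG : ∀ y : Fin n → ℝ,
      (S.mulVec y - c) ⬝ᵥ (S.mulVec y - c) + lam * (y ⬝ᵥ y)
        = ((S.mulVec yl - c) ⬝ᵥ (S.mulVec yl - c) + lam * (yl ⬝ᵥ yl))
          + ((S.mulVec (y - yl)) ⬝ᵥ (S.mulVec (y - yl)) + lam * ((y - yl) ⬝ᵥ (y - yl))) := by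
    intro y
    have hd : (S.mulVec yl - c) ⬝ᵥ (S.mulVec (y - yl)) + lam * (yl ⬝ᵥ (y - yl)) = 0 := by
      rw [dot_trans]
      have h2 : Sᵀ.mulVec (S.mulVec yl - c) = -(lam • yl) :=
        eq_neg_of_add_eq_zero_left hNE
      rw [h2]
      simp only [neg_dotProduct, smul_dotProduct, smul_eq_mul, dotProduct_sub]
      ring
    simp only [mulVec_sub, dotProduct_sub, sub_dotProduct] at hd ⊢
    linear_combination 2 * hd
      + dotProduct_comm c (S.mulVec y)
      + dotProduct_comm (S.mulVec yl) c
      + dotProduct_comm (S.mulVec y) (S.mulVec yl)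
      + lam * dotProduct_comm y yl
  -- minimum value fact
  have hmin : ∀ y : Fin n → ℝ,
      _root_.enorm (A.mulVec (V.mulVec y) - b) ^ 2 + lam * ((V.mulVec y) ⬝ᵥ M.mulVec (V.mulVec y))
        = (_root_.enorm (A.mulVec xlam - b) ^ 2 + lam * (xlam ⬝ᵥ M.mulVec xlam))
          + ((S.mulVec (y - yl)) ⬝ᵥ (S.mulVec (y - yl)) + lam * ((y - yl) ⬝ᵥ (y - yl))) := by
    intro y
    rw [hF y, hG y, hxleq, hF yl]
  have hrep : ∀ x : Fin n → ℝ, x = V.mulVec ((Vᵀ * M).mulVec x) := by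
    intro x
    rw [mulVec_mulVec, hVW, one_mulVec]
  constructor
  · intro x
    have h1 := hmin ((Vᵀ * M).mulVec x)
    rw [← hrep x] at h1
    have h2 : 0 ≤ (S.mulVec ((Vᵀ * M).mulVec x - yl)) ⬝ᵥ (S.mulVec ((Vᵀ * M).mulVec x - yl))
        + lam * (((Vᵀ * M).mulVec x - yl) ⬝ᵥ (((Vᵀ * M).mulVec x - yl))) :=
      add_nonneg (dot_self_nonneg _) (mul_nonneg hlam.le (dot_self_nonneg _))
    linarith
  · intro x hx
    have h1 := hmin ((Vᵀ * M).mulVec x)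
    rw [← hrep x] at h1
    rw [hx] at h1
    set d := (Vᵀ * M).mulVec x - yl with hddef
    have h2 : (S.mulVec d) ⬝ᵥ (S.mulVec d) + lam * (d ⬝ᵥ d) = 0 := by linarith
    have h3 : d ⬝ᵥ d = 0 := by
      nlinarith [dot_self_nonneg (S.mulVec d), dot_self_nonneg d]
    have h4 : d = 0 := dotProduct_self_eq_zero.mp h3
    have h5 : (Vᵀ * M).mulVec x = yl := by
      have := sub_eq_zero.mp h4
      exact this
    rw [hrep x, h5, ← hxleq]
end
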